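/- arXiv:1901.04794 — 6 statements merged into one kernel-verified Lean document; each statement's English description precedes it below -/
import Mathlib

section
/- Define ∇ : E → E ⊗_A E on the basis by ∇(e₁) = ½(e₃ ⊗ e₂ − e₂ ⊗ e₃), ∇(e₂) = ½(e₁ ⊗ e₃ − e₃ ⊗ e₁), ∇(e₃) = ½(e₂ ⊗ e₁ − e₁ ⊗ e₂), extended as a right connection. Then ∇ is torsionless: m(∇(eᵢ)) + d(eᵢ) = 0 for each i, where d(e₁) = m(e₂ ⊗ e₃), d(e₂) = m(e₃ ⊗ e₁), d(e₃) = m(e₁ ⊗ e₂). -/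
open Matrix

/-- The Levi-Civita connection `∇(e₁) = ½(e₃⊗e₂ − e₂⊗e₃)` (and cyclic
permutations) is torsionless: `m(∇(eᵢ)) + d(eᵢ) = 0` for each `i`, where
`d(e₁) = m(e₂⊗e₃)`, `d(e₂) = m(e₃⊗e₁)`, `d(e₃) = m(e₁⊗e₂)`. Tensors in
`E ⊗_A E` are realized as `3×3` matrices over `A`, with `eᵢ⊗eⱼ = E_{ij}`,
and indices are shifted to be `0`-based. -/
theorem levi_civita_torsionless
    {A : Type*} [Ring A] [Algebra ℂ A]
    (N : Fin 3 → Matrix (Fin 3) (Fin 3) A)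
    (hN0 : N 0 = ((1:ℂ)/2) • (Matrix.single 2 1 (1:A) - Matrix.single 1 2 1))
    (hN1 : N 1 = ((1:ℂ)/2) • (Matrix.single 0 2 (1:A) - Matrix.single 2 0 1))
    (hN2 : N 2 = ((1:ℂ)/2) • (Matrix.single 1 0 (1:A) - Matrix.single 0 1 1))
    (m : Matrix (Fin 3) (Fin 3) A → (Fin 3 → A))
    (hm : ∀ x, m x = Pi.single 0 (x 0 1 - x 1 0)
                   + Pi.single 1 (x 0 2 - x 2 0)
                   + Pi.single 2 (x 1 2 - x 2 1))
    (d : Fin 3 → (Fin 3 → A))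
    (hd0 : d 0 = m (Matrix.single 1 2 1))
    (hd1 : d 1 = m (Matrix.single 2 0 1))
    (hd2 : d 2 = m (Matrix.single 0 1 1)) :
    ∀ i, m (N i) + d i = 0 := by
  intro i
  funext j
  fin_cases i <;> fin_cases j <;>
    simp [hN0, hN1, hN2, hd0, hd1, hd2, hm, Matrix.single, Pi.single,
      Function.update, Fin.ext_iff]
  all_goals module
end

section
/- For the connection ∇ above, the quantity Π_g(∇)(eᵢ ⊗ eⱼ) := (g ⊗ id)σ₂₃(∇(eᵢ) ⊗ eⱼ + ∇(eⱼ) ⊗ eᵢ) vanishes for all i, j, i.e. ∇ is compatible with (unitary for) the canonical metric g, since dg = 0 on basis elements. -/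
open Matrix

/-- Metric compatibility of the Levi-Civita connection:
`Π_g(∇)(eᵢ ⊗ eⱼ) = (g ⊗ id)σ₂₃(∇(eᵢ) ⊗ eⱼ + ∇(eⱼ) ⊗ eᵢ) = 0` for all `i, j`.
Elements of `E ⊗ E` are `3×3` matrices over `A`, elements of `E ⊗ E ⊗ E` are
`3`-index arrays, `σ₂₃` flips the last two indices, and
`((g ⊗ id) x) r = Σₚ x p p r` for the canonical metric `g(eᵢ⊗eⱼ) = δᵢⱼ`. -/
theorem levi_civita_metric_compatible
    {A : Type*} [Ring A] [Algebra ℂ A]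
    (N : Fin 3 → Matrix (Fin 3) (Fin 3) A)
    (hN0 : N 0 = ((1:ℂ)/2) • (single 2 1 (1:A) - single 1 2 1))
    (hN1 : N 1 = ((1:ℂ)/2) • (single 0 2 (1:A) - single 2 0 1))
    (hN2 : N 2 = ((1:ℂ)/2) • (single 1 0 (1:A) - single 0 1 1))
    (tens : Matrix (Fin 3) (Fin 3) A → Fin 3 → (Fin 3 → Fin 3 → Fin 3 → A))
    (htens : ∀ M j p q r, tens M j p q r = M p q * (if r = j then 1 else 0))
    (σ₂₃ : (Fin 3 → Fin 3 → Fin 3 → A) → (Fin 3 → Fin 3 → Fin 3 → A))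
    (hσ₂₃ : ∀ x p q r, σ₂₃ x p q r = x p r q)
    (Pig : Fin 3 → Fin 3 → (Fin 3 → A))
    (hPig : ∀ i j r, Pig i j r = ∑ p, σ₂₃ (tens (N i) j + tens (N j) i) p p r) :
    ∀ i j, Pig i j = 0 := by
  intro i j
  funext r
  rw [hPig]
  simp only [hσ₂₃, Pi.add_apply, htens]
  fin_cases i <;> fin_cases j <;> fin_cases r <;>
    simp [hN0, hN1, hN2, Fin.sum_univ_three, Matrix.single, Matrix.smul_apply]
end

section
/- For the torsionless connection ∇₀ with ∇₀(e₁) = e₃ ⊗ e₂, ∇₀(e₂) = e₁ ⊗ e₃, ∇₀(e₃) = e₂ ⊗ e₁ and the canonical metric g, writing Π_g(∇₀)(eᵢ ⊗ eⱼ) = −Σₘ T^m_{ij} eₘ, one has T^m_{ij} = −1 if i,j,m are pairwise distinct and T^m_{ij} = 0 otherwise; in particular Π_g(∇₀)(e₁ ⊗ e₂) = e₃, Π_g(∇₀)(e₂ ⊗ e₃) = e₁, Π_g(∇₀)(e₁ ⊗ e₃) = e₂, and Π_g(∇₀)(eᵢ ⊗ eᵢ) = 0. -/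
open Matrix

/-- For the torsionless connection `∇₀(e₁)=e₃⊗e₂, ∇₀(e₂)=e₁⊗e₃, ∇₀(e₃)=e₂⊗e₁`
and the canonical metric, writing `Π_g(∇₀)(eᵢ⊗eⱼ) = −Σₘ T^m_{ij} eₘ`, one has
`T^m_{ij} = −1` when `i,j,m` are pairwise distinct and `0` otherwise; in
particular (0-based indices) `Π_g(∇₀)(e₀⊗e₁) = e₂`, `Π_g(∇₀)(e₁⊗e₂) = e₀`,
`Π_g(∇₀)(e₀⊗e₂) = e₁` and `Π_g(∇₀)(eᵢ⊗eᵢ) = 0`. -/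
theorem christoffel_symbols_of_torsionless_connection
    {A : Type*} [Ring A]
    (M : Fin 3 → Matrix (Fin 3) (Fin 3) A)
    (hM0 : M 0 = Matrix.single 2 1 (1:A))
    (hM1 : M 1 = Matrix.single 0 2 (1:A))
    (hM2 : M 2 = Matrix.single 1 0 (1:A))
    (tens : Matrix (Fin 3) (Fin 3) A → Fin 3 → (Fin 3 → Fin 3 → Fin 3 → A))
    (htens : ∀ X j p q r, tens X j p q r = X p q * (if r = j then 1 else 0))
    (σ₂₃ : (Fin 3 → Fin 3 → Fin 3 → A) → (Fin 3 → Fin 3 → Fin 3 → A))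
    (hσ₂₃ : ∀ x p q r, σ₂₃ x p q r = x p r q)
    (Pig : Fin 3 → Fin 3 → (Fin 3 → A))
    (hPig : ∀ i j r, Pig i j r = ∑ p, σ₂₃ (tens (M i) j + tens (M j) i) p p r)
    (T : Fin 3 → Fin 3 → Fin 3 → A)
    (hT : ∀ i j r, Pig i j r = -∑ m, T m i j * (if r = m then 1 else 0)) :
    (∀ m i j, T m i j = if i ≠ j ∧ j ≠ m ∧ i ≠ m then -1 else 0) ∧
    Pig 0 1 = Pi.single 2 1 ∧ Pig 1 2 = Pi.single 0 1 ∧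
    Pig 0 2 = Pi.single 1 1 ∧ (∀ i, Pig i i = 0) := by

  have hPval : ∀ i j r, Pig i j r = if (i ≠ j ∧ j ≠ r ∧ i ≠ r) then (1:A) else 0 := by
    intro i j r
    rw [hPig]
    simp only [Pi.add_apply, hσ₂₃, htens]
    fin_cases i <;> fin_cases j <;> fin_cases r <;>
      simp [Fin.sum_univ_three, hM0, hM1, hM2, Matrix.single, Matrix.of_apply]
  have hTval : ∀ m i j, T m i j = -Pig i j m := by
    intro m i j
    have := hT i j m
    rw [Fintype.sum_eq_single m (by intro x hx; simp [Ne.symm hx])] at this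
    simp at this
    rw [this, neg_neg]
  refine ⟨?_, ?_, ?_, ?_, ?_⟩
  · intro m i j
    rw [hTval, hPval]
    by_cases h : i ≠ j ∧ j ≠ m ∧ i ≠ m <;> simp [h]
  · funext r; rw [hPval]; fin_cases r <;> simp [Pi.single_apply]
  · funext r; rw [hPval]; fin_cases r <;> simp [Pi.single_apply]
  · funext r; rw [hPval]; fin_cases r <;> simp [Pi.single_apply]
  · intro i; funext r; rw [hPval]; simp
end

section
/- For the Levi-Civita connection ∇ with ∇(e₁) = ½(e₃⊗e₂ − e₂⊗e₃) and cyclic permutations, the curvature R(∇)(e₁) = (1−P_sym)₂₃(∇(e₃) ⊗ e₂ − ∇(e₂) ⊗ e₃)·½ + ½(e₃ ⊗ Q⁻¹(de₂) − e₂ ⊗ Q⁻¹(de₃)) equals ⅛(e₂⊗e₂⊗e₁ + e₃⊗e₃⊗e₁ − e₂⊗e₁⊗e₂ − e₃⊗e₁⊗e₃), where Q⁻¹(m(eᵢ ⊗ eⱼ)) = ½(eᵢ⊗eⱼ − eⱼ⊗eᵢ). -/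
open Matrix

/-- Computation of the curvature on the first basis one-form (0-based indices):
`R(∇)(e₀) = ½(1−P_sym)₂₃(∇(e₂)⊗e₁ − ∇(e₁)⊗e₂) + ½(e₂ ⊗ Q⁻¹(de₁) − e₁ ⊗ Q⁻¹(de₂))`
equals `⅛(e₁⊗e₁⊗e₀ + e₂⊗e₂⊗e₀ − e₁⊗e₀⊗e₁ − e₂⊗e₀⊗e₂)`, where
`Q⁻¹(m(eᵢ⊗eⱼ)) = ½(eᵢ⊗eⱼ − eⱼ⊗eᵢ)`. Elements of `E⊗E` are `3×3` matrices over
`A` and elements of `E⊗E⊗E` are `3`-index arrays. -/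
theorem curvature_on_first_basis_form
    {A : Type*} [Ring A] [Algebra ℂ A]
    (N : Fin 3 → Matrix (Fin 3) (Fin 3) A)
    (hN0 : N 0 = ((1:ℂ)/2) • (Matrix.single 2 1 (1:A) - Matrix.single 1 2 1))
    (hN1 : N 1 = ((1:ℂ)/2) • (Matrix.single 0 2 (1:A) - Matrix.single 2 0 1))
    (hN2 : N 2 = ((1:ℂ)/2) • (Matrix.single 1 0 (1:A) - Matrix.single 0 1 1))
    -- `Q⁻¹(d(e₁)) = Q⁻¹(m(e₂⊗e₀)) = ½(e₂⊗e₀ − e₀⊗e₂)` and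
    -- `Q⁻¹(d(e₂)) = Q⁻¹(m(e₀⊗e₁)) = ½(e₀⊗e₁ − e₁⊗e₀)`:
    (Qd1 Qd2 : Matrix (Fin 3) (Fin 3) A)
    (hQd1 : Qd1 = ((1:ℂ)/2) • (Matrix.single 2 0 (1:A) - Matrix.single 0 2 1))
    (hQd2 : Qd2 = ((1:ℂ)/2) • (Matrix.single 0 1 (1:A) - Matrix.single 1 0 1))
    -- `tens X j = X ⊗ eⱼ` and `ltens j X = eⱼ ⊗ X`:
    (tens : Matrix (Fin 3) (Fin 3) A → Fin 3 → (Fin 3 → Fin 3 → Fin 3 → A))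
    (htens : ∀ X j p q r, tens X j p q r = X p q * (if r = j then 1 else 0))
    (ltens : Fin 3 → Matrix (Fin 3) (Fin 3) A → (Fin 3 → Fin 3 → Fin 3 → A))
    (hltens : ∀ j X p q r, ltens j X p q r = (if p = j then 1 else 0) * X q r)
    -- `(1 − P_sym)` applied to the second and third tensor factors:
    (asym23 : (Fin 3 → Fin 3 → Fin 3 → A) → (Fin 3 → Fin 3 → Fin 3 → A))
    (hasym23 : ∀ x p q r, asym23 x p q r = x p q r - ((1:ℂ)/2) • (x p q r + x p r q))
    -- the basis `3`-tensors `e_a ⊗ e_b ⊗ e_c`: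
    (e3 : Fin 3 → Fin 3 → Fin 3 → (Fin 3 → Fin 3 → Fin 3 → A))
    (he3 : ∀ a b c p q r, e3 a b c p q r =
      if p = a ∧ q = b ∧ r = c then (1:A) else 0)
    (R1 : Fin 3 → Fin 3 → Fin 3 → A)
    (hR1 : R1 = ((1:ℂ)/2) • (asym23 (tens (N 2) 1 - tens (N 1) 2))
              + ((1:ℂ)/2) • (ltens 2 Qd1 - ltens 1 Qd2)) :
    R1 = ((1:ℂ)/8) • (e3 1 1 0 + e3 2 2 0 - e3 1 0 1 - e3 2 0 2) := by
  subst hR1 hQd1 hQd2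
  funext p q r
  simp only [Pi.add_apply, Pi.sub_apply, Pi.smul_apply, htens, hltens, hasym23,
    he3, hN0, hN1, hN2, Matrix.smul_apply, Matrix.sub_apply,
    Matrix.single]
  fin_cases p <;> fin_cases q <;> fin_cases r <;>
    norm_num [smul_sub, smul_add, smul_smul, Fin.ext_iff] <;>
    module
end

section
/- The Ricci tensor of the Levi-Civita connection for the canonical metric on the differential calculus of O₃, defined by Ric = (id ⊗ ev∘ρ)(Θ) where Θ = (σ₂₃ ⊗ id)ζ⁻¹R(∇), equals −¼ Σⱼ eⱼ ⊗ eⱼ; equivalently Ric(eᵢ, eⱼ) = −¼ δ_{ij}. -/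
/-!
Evaluated on the diagonal `r = s`, the first summand of `R(∇)` would need `p = r` and `p ≠ r`
at once, so it never contributes to the contraction; the second one contributes `-⅛ δ_{pq}` for
each of the `n - 1` indices `r ≠ p`. Hence `Ric = -(n - 1)/8 · δ`, which is `-¼ δ` for `n = 3`.
-/

theorem sum_ite_ne_eq_card_sub_one {A ι : Type*} [AddCommGroupWithOne A] [Fintype ι]
    [DecidableEq ι] (p : ι) :
    ∑ r : ι, (if r ≠ p then (1 : A) else 0) = Fintype.card ι - 1 := by
  rw [Finset.sum_boole, Finset.filter_ne', Finset.card_erase_of_mem (Finset.mem_univ p),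
    Nat.cast_pred (Finset.card_pos.2 ⟨p, Finset.mem_univ p⟩), Finset.card_univ]

theorem curvature_diag_term {A ι : Type*} [AddGroupWithOne A] [DecidableEq ι] (p q r : ι) :
    ((if p = r ∧ p ≠ r ∧ q = r then 1 else 0) - (if p ≠ r ∧ r = r ∧ q = p then 1 else 0) : A)
      = -if p = q then (if r ≠ p then 1 else 0) else 0 := by
  rw [if_neg fun h => h.2.1 h.1, zero_sub, ← ite_and]
  simp only [true_and, ne_comm, eq_comm (a := q), and_comm]

theorem sum_curvature_diag {A ι : Type*} [Ring A] [Algebra ℚ A] [Fintype ι] [DecidableEq ι]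
    (RT : ι → ι → ι → ι → A)
    (hRT : ∀ p q r s, RT p q r s =
      algebraMap ℚ A (1/8) *
        ((if p = q ∧ p ≠ s ∧ r = s then 1 else 0) - (if p ≠ s ∧ q = s ∧ r = p then 1 else 0)))
    (p q : ι) :
    ∑ r, RT p r q r = if p = q then algebraMap ℚ A (-((Fintype.card ι - 1) / 8)) else 0 := by
  rw [Finset.sum_congr rfl fun r _ => (hRT p r q r).trans (congrArg _ (curvature_diag_term p q r)),
    ← Finset.mul_sum, Finset.sum_neg_distrib, Finset.sum_ite_irrel, sum_ite_ne_eq_card_sub_one,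
    Finset.sum_const_zero]
  split_ifs
  · rw [← map_natCast (algebraMap ℚ A), ← map_one (algebraMap ℚ A), ← map_sub, ← map_neg,
      ← map_mul]
    congr 1
    ring
  · rw [neg_zero, mul_zero]

/-- `RT p q r s` is the coefficient of `e_p ⊗ e_q ⊗ e_r` in `R(∇)(e_s)` (indices from `0`);
`Θ` swaps the middle two indices and `Ric` contracts the last two. -/
theorem ricci_tensor_eq
    {A : Type*} [Ring A] [Algebra ℚ A]
    (RT : Fin 3 → Fin 3 → Fin 3 → Fin 3 → A)
    (hRT : ∀ p q r s, RT p q r s =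
      algebraMap ℚ A (1/8) *
        ((if p = q ∧ p ≠ s ∧ r = s then 1 else 0)
          - (if p ≠ s ∧ q = s ∧ r = p then 1 else 0)))
    (Θ : Fin 3 → Fin 3 → Fin 3 → Fin 3 → A)
    (hΘ : ∀ p q r s, Θ p q r s = RT p r q s)
    (Ric : Fin 3 → Fin 3 → A)
    (hRic : ∀ p q, Ric p q = ∑ r, Θ p q r r) :
    ∀ p q, Ric p q = if p = q then algebraMap ℚ A (-(1/4)) else 0 := by
  intro p q
  simp only [hRic, hΘ]
  rw [sum_curvature_diag RT hRT, Fintype.card_fin]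
  norm_num
end

section
/- In the Cuntz algebra O₃ with generators S₁,S₂,S₃ and the derivations ∂ⱼ determined by the SO(3) action, one has S₁*∂ⱼ(S₁) = 0 for all j = 1,2,3, while Σⱼ ∂ⱼ(S₁*)∂ⱼ(S₁) = 2·1. Consequently the universal one-form ω = S₁*δS₁ satisfies Π(ω) = 0 but Π(δω) = 2 ⊗ 𝕀 ≠ 0, so δω is a nonzero junk form. -/
theorem junk_form_identities_general
    {A : Type*} [Ring A] [StarRing A]
    (S : Fin 3 → A)
    (hiso : ∀ i, star (S i) * S i = 1)
    (horth : ∀ i j, i ≠ j → star (S i) * S j = 0)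
    (d : Fin 3 → A →+ A)
    (hstar : ∀ j a, d j (star a) = star (d j a))
    (h1 : d 0 (S 0) = 0) (h2 : d 1 (S 0) = -S 2) (h3 : d 2 (S 0) = S 1) :
    (∀ j, star (S 0) * d j (S 0) = 0) ∧
    (∑ j, d j (star (S 0)) * d j (S 0) = 2) := by
  refine ⟨fun j => ?_, ?_⟩
  · fin_cases j
    · simp [h1]
    · simp [h2, horth 0 2]
    · simp [h3, horth 0 1]
  · calc ∑ j, d j (star (S 0)) * d j (S 0)
        = ∑ j, star (d j (S 0)) * d j (S 0) := by simp only [hstar]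
      _ = star (S 2) * S 2 + star (S 1) * S 1 := by
        simp [Fin.sum_univ_three, h1, h2, h3]
      _ = 2 := by rw [hiso, hiso]; norm_num

/-- In the Cuntz algebra `O₃` with the derivations `∂ⱼ` coming from the
`SO(3)`-action, one has `S₁*∂ⱼ(S₁) = 0` for all `j` while
`Σⱼ ∂ⱼ(S₁*)∂ⱼ(S₁) = 2·1`; hence the one-form `ω = S₁*δS₁` satisfies
`Π(ω) = 0` but `Π(δω) = 2 ⊗ 𝕀 ≠ 0`, a nonzero junk form. -/
theorem junk_form_identities
    {A : Type*} [Ring A] [StarRing A]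
    (S : Fin 3 → A)
    (hiso : ∀ i, star (S i) * S i = 1)
    (hsum : ∑ j, S j * star (S j) = 1)
    (horth : ∀ i j, i ≠ j → star (S i) * S j = 0)
    (d : Fin 3 → A →+ A)
    (hstar : ∀ j a, d j (star a) = star (d j a))
    (h1 : d 0 (S 0) = 0) (h2 : d 1 (S 0) = -S 2) (h3 : d 2 (S 0) = S 1) :
    (∀ j, star (S 0) * d j (S 0) = 0) ∧
    (∑ j, d j (star (S 0)) * d j (S 0) = 2) :=
  junk_form_identities_general S hiso horth d hstar h1 h2 h3
end
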